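/- arXiv:2407.17823 — 6 statements merged into one kernel-verified Lean document; each statement's English description precedes it below -/
import Mathlib

section
/- If a differentiable function g: R^p -> R satisfies the Polyak-Łojasiewicz condition with constant μ > 0, i.e., ‖∇g(y)‖² ≥ 2μ(g(y) - inf g) for all y, then g satisfies the quadratic growth condition: g(y) - inf g ≥ (μ/2)·dist(y, argmin g)² for all y, where dist(y, argmin g) is the distance from y to the set of minimizers (assumed nonempty). -/
open scoped RealInnerProductSpace

private lemma aux_arith (μ c' s N : ℝ) (hμ : 0 < μ) (hc'0 : 0 < c') (hs0 : 0 < s)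
    (hN : 0 < N) (hd0 : 0 ≤ -N ^ 2 / (2 * s) + c' * N)
    (hPL : N ^ 2 ≥ 2 * μ * s ^ 2) : Real.sqrt (μ / 2) ≤ c' := by
  have hneg : -N ^ 2 / (2 * s) = -(N ^ 2 / (2 * s)) := neg_div _ _
  rw [hneg] at hd0
  have h7 : N ^ 2 / (2 * s) ≤ c' * N := by linarith
  rw [div_le_iff₀ (by linarith)] at h7
  have h8 : N ≤ 2 * c' * s := by
    have h8a : N * N ≤ (2 * c' * s) * N := by nlinarith
    exact le_of_mul_le_mul_right h8a hN
  have h8' : N ^ 2 ≤ (2 * c' * s) ^ 2 := pow_le_pow_left₀ hN.le h8 2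
  have h9 : μ / 2 ≤ c' ^ 2 := by nlinarith [mul_pos hs0 hs0]
  calc Real.sqrt (μ / 2) ≤ Real.sqrt (c' ^ 2) := Real.sqrt_le_sqrt h9
    _ = c' := Real.sqrt_sq hc'0.le

open Metric Filter Topology InnerProductSpace in
private lemma aux_key {p : ℕ} (g : EuclideanSpace ℝ (Fin p) → ℝ) (μ : ℝ) (hμ : 0 < μ)
    (hdiff : Differentiable ℝ g)
    (S : Set (EuclideanSpace ℝ (Fin p)))
    (hS : S = {y | ∀ z, g y ≤ g z}) (x₀ : EuclideanSpace ℝ (Fin p))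
    (hx₀ : ∀ z, g x₀ ≤ g z)
    (hPL : ∀ y, ‖gradient g y‖ ^ 2 ≥ 2 * μ * (g y - g x₀))
    (y : EuclideanSpace ℝ (Fin p)) (c' : ℝ) (hc'0 : 0 < c')
    (hc'K : c' < Real.sqrt (μ / 2)) :
    c' * Metric.infDist y S ≤ Real.sqrt (g y - g x₀) := by
  set A := Real.sqrt (g y - g x₀) with hA
  set R := A / c' with hRdef
  have hA0 : 0 ≤ A := Real.sqrt_nonneg _
  have hR0 : 0 ≤ R := div_nonneg hA0 hc'0.le
  set φ : EuclideanSpace ℝ (Fin p) → ℝ :=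
    fun z => Real.sqrt (g z - g x₀) + c' * ‖z - y‖ with hφdef
  have hφc : Continuous φ := by
    apply Continuous.add
    · exact Real.continuous_sqrt.comp (hdiff.continuous.sub continuous_const)
    · exact continuous_const.mul ((continuous_id.sub continuous_const).norm)
  obtain ⟨x, hxK, hxmin⟩ := (isCompact_closedBall y R).exists_isMinOn
    ⟨y, mem_closedBall_self hR0⟩ hφc.continuousOn
  have hφy : φ y = A := by simp [hφdef, hA]
  have hφx_le : φ x ≤ A := hφy ▸ hxmin (mem_closedBall_self hR0)
  have hgx0 : 0 ≤ g x - g x₀ := sub_nonneg.2 (hx₀ x)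
  rcases eq_or_lt_of_le hgx0 with hgx | hgx
  · -- the minimizer satisfies g x = g x₀, hence x ∈ S
    have hxS : x ∈ S := by
      rw [hS]
      intro z
      have hx : g x = g x₀ := by linarith
      rw [hx]; exact hx₀ z
    have h1 : Metric.infDist y S ≤ dist y x := Metric.infDist_le_dist_of_mem hxS
    have h2 : dist y x ≤ R := by rw [dist_comm]; exact mem_closedBall.mp hxK
    calc c' * Metric.infDist y S ≤ c' * R := by
          exact mul_le_mul_of_nonneg_left (h1.trans h2) hc'0.le
      _ = A := by rw [hRdef]; field_simp
  · exfalso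
    set s := Real.sqrt (g x - g x₀) with hsdef
    have hs0 : 0 < s := Real.sqrt_pos.2 hgx
    have hball : x ∈ ball y R := by
      have h1 : s + c' * ‖x - y‖ ≤ A := hφx_le
      have h2 : ‖x - y‖ < R := by
        rw [hRdef, lt_div_iff₀ hc'0]; nlinarith
      simpa [mem_ball, dist_eq_norm] using h2
    have hloc : IsLocalMin φ x := hxmin.isLocalMin (closedBall_mem_nhds_of_mem hball)
    set u := gradient g x with hu
    have hPLx := hPL x
    have hs2 : g x - g x₀ = s ^ 2 := (Real.sq_sqrt hgx0).symm
    have hu0 : 0 < ‖u‖ := by nlinarith [norm_nonneg u]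
    set v := -u with hv
    -- the line t ↦ x + t • v
    have hline : HasDerivAt (fun t : ℝ => x + t • v) v 0 := by
      simpa using ((hasDerivAt_id (0 : ℝ)).smul_const v).const_add x
    have hgd : HasDerivAt (fun t : ℝ => g (x + t • v)) ⟪u, v⟫ 0 := by
      have h1 : HasFDerivAt g (fderiv ℝ g x) (x + (0 : ℝ) • v) := by
        simpa using (hdiff x).hasFDerivAt
      have h2 := h1.comp_hasDerivAt 0 hline
      have h3 : fderiv ℝ g x v = ⟪u, v⟫ := by
        rw [hu]
        simp [gradient, InnerProductSpace.toDual_symm_apply]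
      simpa [Function.comp_def, h3] using h2
    have hsd : HasDerivAt (fun t : ℝ => Real.sqrt (g (x + t • v) - g x₀))
        (1 / (2 * s) * ⟪u, v⟫) 0 := by
      have h1 : HasDerivAt (fun t : ℝ => g (x + t • v) - g x₀) ⟪u, v⟫ 0 :=
        hgd.sub_const _
      have h2 : HasDerivAt Real.sqrt (1 / (2 * Real.sqrt (g (x + (0:ℝ) • v) - g x₀)))
          (g (x + (0:ℝ) • v) - g x₀) := by
        apply Real.hasDerivAt_sqrt
        simpa using ne_of_gt hgx
      have h3 := h2.comp 0 h1
      simpa [Function.comp_def, ← hsdef] using h3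
    set d : ℝ := 1 / (2 * s) * ⟪u, v⟫ + c' * ‖v‖ with hd
    set ψ : ℝ → ℝ :=
      fun t => Real.sqrt (g (x + t • v) - g x₀) + (c' * ‖x - y‖ + c' * ‖v‖ * t) with hψdef
    have hψd : HasDerivAt ψ d 0 := by
      have h1 : HasDerivAt (fun t : ℝ => c' * ‖x - y‖ + c' * ‖v‖ * t) (c' * ‖v‖) 0 := by
        simpa using ((hasDerivAt_id (0 : ℝ)).const_mul (c' * ‖v‖)).const_add (c' * ‖x - y‖)
      exact hsd.add h1
    -- ψ has a one-sided local minimum at 0 from the right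
    have hev : ∀ᶠ t in 𝓝[>] (0 : ℝ), ψ 0 ≤ ψ t := by
      have h1 : Tendsto (fun t : ℝ => x + t • v) (𝓝 0) (𝓝 x) := by
        have := hline.continuousAt
        simpa using this.tendsto
      have h2 : ∀ᶠ t in 𝓝 (0 : ℝ), φ x ≤ φ (x + t • v) := h1.eventually hloc
      filter_upwards [eventually_nhdsWithin_of_eventually_nhds h2,
        self_mem_nhdsWithin] with t h2t (ht : 0 < t)
      have h3 : φ (x + t • v) ≤ ψ t := by
        have h4 : ‖x + t • v - y‖ ≤ ‖x - y‖ + ‖v‖ * t := by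
          have : x + t • v - y = (x - y) + t • v := by abel
          rw [this]
          calc ‖(x - y) + t • v‖ ≤ ‖x - y‖ + ‖t • v‖ := norm_add_le _ _
            _ = ‖x - y‖ + ‖v‖ * t := by
                rw [norm_smul, Real.norm_eq_abs, abs_of_pos ht]; ring
        simp only [hφdef, hψdef]
        nlinarith
      have h5 : ψ 0 = φ x := by simp [hψdef, hφdef, ← hsdef]
      linarith [h2t.trans h3, h5.le]
    have hd0 : 0 ≤ d := by
      have hslope : Tendsto (slope ψ 0) (𝓝[>] 0) (𝓝 d) :=
        (hasDerivAt_iff_tendsto_slope.mp hψd).mono_left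
          (nhdsWithin_mono _ fun t ht => ne_of_gt ht)
      refine ge_of_tendsto hslope ?_
      filter_upwards [hev, self_mem_nhdsWithin] with t h1 (ht : 0 < t)
      rw [slope_def_field]
      simp only [sub_zero]
      exact div_nonneg (by linarith) ht.le
    -- compute d and derive contradiction
    have hdval : d = -‖u‖ ^ 2 / (2 * s) + c' * ‖u‖ := by
      rw [hd, hv]
      rw [inner_neg_right, real_inner_self_eq_norm_sq, norm_neg]
      ring
    rw [hdval] at hd0
    have hPLx' : ‖u‖ ^ 2 ≥ 2 * μ * s ^ 2 := by rw [← hs2]; exact hPLx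
    have hfin := aux_arith μ c' s ‖u‖ hμ hc'0 hs0 hu0 hd0 hPLx'
    linarith

theorem stmt_0 {p : ℕ} (g : EuclideanSpace ℝ (Fin p) → ℝ) (μ : ℝ) (hμ : 0 < μ)
    (hdiff : Differentiable ℝ g)
    (S : Set (EuclideanSpace ℝ (Fin p)))
    (hS : S = {y | ∀ z, g y ≤ g z}) (hne : S.Nonempty)
    (hPL : ∀ y, ‖gradient g y‖ ^ 2 ≥ 2 * μ * (g y - ⨅ z, g z)) :
    ∀ y, g y - ⨅ z, g z ≥ μ / 2 * (Metric.infDist y S) ^ 2 := by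
  obtain ⟨x₀, hx₀S⟩ := hne
  have hx₀ : ∀ z, g x₀ ≤ g z := by rw [hS] at hx₀S; exact hx₀S
  have hbdd : BddBelow (Set.range g) := ⟨g x₀, by rintro _ ⟨z, rfl⟩; exact hx₀ z⟩
  have hinf : (⨅ z, g z) = g x₀ := le_antisymm (ciInf_le hbdd x₀) (le_ciInf hx₀)
  rw [hinf] at hPL ⊢
  intro y
  set D := Metric.infDist y S with hD
  have hD0 : 0 ≤ D := Metric.infDist_nonneg
  have hgy : 0 ≤ g y - g x₀ := sub_nonneg.2 (hx₀ y)
  set K := Real.sqrt (μ / 2) with hK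
  have hK0 : 0 < K := Real.sqrt_pos.2 (by linarith)
  set A := Real.sqrt (g y - g x₀) with hA
  have hA0 : 0 ≤ A := Real.sqrt_nonneg _
  have key : ∀ c' : ℝ, 0 < c' → c' < K → c' * D ≤ A := fun c' h1 h2 =>
    aux_key g μ hμ hdiff S hS x₀ hx₀ hPL y c' h1 h2
  have h2 : K * D ≤ A := by
    rcases eq_or_lt_of_le hD0 with hD0' | hD0'
    · rw [← hD0', mul_zero]; exact hA0
    · by_contra hcon
      push_neg at hcon
      set c' := (A / D + K) / 2 with hc'
      have hAD : A / D < K := (div_lt_iff₀ hD0').2 (by linarith)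
      have hc'1 : 0 < c' := by
        have : 0 ≤ A / D := div_nonneg hA0 hD0
        rw [hc']; linarith
      have hc'2 : c' < K := by rw [hc']; linarith
      have hc'3 : A / D < c' := by rw [hc']; linarith
      have := key c' hc'1 hc'2
      rw [div_lt_iff₀ hD0'] at hc'3
      linarith [mul_comm c' D]
  have hKsq : K ^ 2 = μ / 2 := Real.sq_sqrt (by linarith)
  have hAsq : A ^ 2 = g y - g x₀ := Real.sq_sqrt hgy
  have := mul_self_le_mul_self (by positivity) h2
  nlinarith
end

section
/- If a differentiable L-smooth function g: R^p -> R satisfies the PL condition with constant μ > 0 and has a minimizer set Y*, then for every y ∈ R^p there exists y* ∈ Y* (a nearest minimizer) such that ‖∇g(y)‖ ≥ μ·‖y - y*‖ (error bound condition). -/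
set_option maxHeartbeats 1000000

open scoped RealInnerProductSpace
open Set

variable {p : ℕ}

lemma path_deriv {g : EuclideanSpace ℝ (Fin p) → ℝ} (hdiff : Differentiable ℝ g)
    (a v : EuclideanSpace ℝ (Fin p)) (t : ℝ) :
    HasDerivAt (fun t : ℝ => g (a + t • v)) ⟪gradient g (a + t • v), v⟫ t := by
  have hc : HasDerivAt (fun t : ℝ => a + t • v) v t := by
    simpa using ((hasDerivAt_id t).smul_const v).const_add a
  have hg := ((hdiff (a + t • v)).hasGradientAt).hasFDerivAt
  have := hg.comp_hasDerivAt t hc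
  simpa [InnerProductSpace.toDual_apply_apply, Function.comp_def] using this

lemma quad_bound {g : EuclideanSpace ℝ (Fin p) → ℝ} {L : ℝ} (hdiff : Differentiable ℝ g)
    (hLip : ∀ y₁ y₂, ‖gradient g y₁ - gradient g y₂‖ ≤ L * ‖y₁ - y₂‖)
    (a b : EuclideanSpace ℝ (Fin p)) :
    g b ≤ g a + ⟪gradient g a, b - a⟫ + L / 2 * ‖b - a‖ ^ 2 := by
  set v := b - a with hv
  set φ : ℝ → ℝ := fun t => g (a + t • v) - t * ⟪gradient g a, v⟫ - t ^ 2 * (L * ‖v‖ ^ 2) / 2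
    with hφ
  have hd : ∀ t : ℝ, HasDerivAt φ
      (⟪gradient g (a + t • v), v⟫ - ⟪gradient g a, v⟫ - t * (L * ‖v‖ ^ 2)) t := by
    intro t
    have h1 := path_deriv hdiff a v t
    have h2 : HasDerivAt (fun t : ℝ => t * ⟪gradient g a, v⟫) ⟪gradient g a, v⟫ t := by
      simpa using (hasDerivAt_id t).mul_const _
    have h3 : HasDerivAt (fun t : ℝ => t ^ 2 * (L * ‖v‖ ^ 2) / 2) (t * (L * ‖v‖ ^ 2)) t := by
      have := ((hasDerivAt_pow 2 t).mul_const (L * ‖v‖ ^ 2)).div_const 2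
      exact this.congr_deriv (by norm_num; ring)
    exact (h1.sub h2).sub h3
  have hmono : AntitoneOn φ (Icc 0 1) := by
    apply antitoneOn_of_deriv_nonpos (convex_Icc 0 1)
    · exact Continuous.continuousOn (by
        have : Continuous φ := by
          apply Continuous.sub
          apply Continuous.sub
          · exact hdiff.continuous.comp (by continuity)
          · continuity
          · continuity
        exact this)
    · intro t ht
      exact (hd t).differentiableAt.differentiableWithinAt
    · intro t ht
      rw [(hd t).deriv]
      rw [interior_Icc] at ht
      have ht0 : 0 < t := ht.1
      have key : ⟪gradient g (a + t • v), v⟫ - ⟪gradient g a, v⟫ ≤ t * (L * ‖v‖ ^ 2) := by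
        rw [← inner_sub_left]
        calc ⟪gradient g (a + t • v) - gradient g a, v⟫
            ≤ ‖gradient g (a + t • v) - gradient g a‖ * ‖v‖ := real_inner_le_norm _ _
          _ ≤ (L * ‖(a + t • v) - a‖) * ‖v‖ := by
              exact mul_le_mul_of_nonneg_right (hLip _ _) (norm_nonneg _)
          _ = t * (L * ‖v‖ ^ 2) := by
              simp [norm_smul, abs_of_pos ht0]; ring
      linarith
  have h01 := hmono (by simp : (0:ℝ) ∈ Icc (0:ℝ) 1) (by simp : (1:ℝ) ∈ Icc (0:ℝ) 1) zero_le_one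
  simp only [hφ] at h01
  simp only [zero_smul, add_zero, one_smul, zero_mul, sub_zero, one_mul, one_pow] at h01
  have : a + v = b := by rw [hv]; abel
  rw [this] at h01
  linarith

lemma key {g : EuclideanSpace ℝ (Fin p) → ℝ} {μ L : ℝ} (hμ : 0 < μ) (hL : 0 < L)
    (hdiff : Differentiable ℝ g)
    (hLip : ∀ y₁ y₂, ‖gradient g y₁ - gradient g y₂‖ ≤ L * ‖y₁ - y₂‖)
    {y₀ : EuclideanSpace ℝ (Fin p)} (hmin : ∀ z, g y₀ ≤ g z)
    (hPL : ∀ x, ‖gradient g x‖ ^ 2 ≥ 2 * μ * (g x - g y₀))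
    {S : Set (EuclideanSpace ℝ (Fin p))} (hS : S = {y | ∀ z, g y ≤ g z})
    (y : EuclideanSpace ℝ (Fin p)) {η : ℝ} (hη1 : 0 < η) (hη2 : η ≤ 1 / L)
    (hη3 : η ≤ 1 / (2 * μ)) :
    (1 - η * L / 2) * Real.sqrt (μ / 2) * Metric.infDist y S ≤ Real.sqrt (g y - g y₀) := by
  set f : EuclideanSpace ℝ (Fin p) → ℝ := fun x => g x - g y₀ with hf
  have hf0 : ∀ x, 0 ≤ f x := fun x => sub_nonneg.2 (hmin x)
  have hηL : η * L ≤ 1 := by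
    rw [le_div_iff₀ hL] at hη2; linarith
  have hημ : 2 * μ * η ≤ 1 := by
    rw [le_div_iff₀ (by positivity : (0:ℝ) < 2 * μ)] at hη3; linarith
  have hfac : (1:ℝ)/2 ≤ 1 - η * L / 2 := by linarith
  set δ : ℝ := η * (1 - η * L / 2) with hδdef
  have hδ : 0 < δ := by
    apply mul_pos hη1; linarith
  have hδη : δ ≤ η := by
    rw [hδdef]; nlinarith [mul_nonneg hη1.le (mul_nonneg hη1.le hL.le)]
  set m : ℝ := Real.sqrt (μ / 2) with hm
  have hm0 : 0 < m := Real.sqrt_pos.2 (by positivity)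
  have hm2 : m ^ 2 = μ / 2 := Real.sq_sqrt (by positivity)
  -- descent step
  have descent : ∀ x, f (x - η • gradient g x) ≤ f x - δ * ‖gradient g x‖ ^ 2 := by
    intro x
    have h := quad_bound hdiff hLip x (x - η • gradient g x)
    have e1 : x - η • gradient g x - x = -(η • gradient g x) := by abel
    rw [e1] at h
    rw [inner_neg_right, real_inner_smul_right, real_inner_self_eq_norm_sq, norm_neg,
      norm_smul] at h
    simp only [Real.norm_eq_abs, abs_of_pos hη1] at h
    have : g (x - η • gradient g x) ≤ g x - δ * ‖gradient g x‖ ^ 2 := by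
      rw [hδdef]; nlinarith [h]
    simp only [hf]; linarith
  -- the sequence
  set T : EuclideanSpace ℝ (Fin p) → EuclideanSpace ℝ (Fin p) :=
    fun x => x - η • gradient g x with hT
  set seq : ℕ → EuclideanSpace ℝ (Fin p) := fun n => T^[n] y with hseq
  have hseq0 : seq 0 = y := rfl
  have hseqS : ∀ n, seq (n + 1) = seq n - η • gradient g (seq n) := by
    intro n
    rw [hseq]
    simp only [Function.iterate_succ_apply' T n y]
    rfl
  set c : ℝ := (1 - η * L / 2) * m with hcdef
  have hc : 0 < c := mul_pos (by linarith) hm0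
  -- per-step sqrt decrease
  have step : ∀ n, c * ‖seq (n + 1) - seq n‖ ≤
      Real.sqrt (f (seq n)) - Real.sqrt (f (seq (n + 1))) := by
    intro n
    set G := ‖gradient g (seq n)‖ with hG
    have hG0 : 0 ≤ G := norm_nonneg _
    have hstep : ‖seq (n + 1) - seq n‖ = η * G := by
      rw [hseqS n]
      have : seq n - η • gradient g (seq n) - seq n = -(η • gradient g (seq n)) := by abel
      rw [this, norm_neg, norm_smul, Real.norm_eq_abs, abs_of_pos hη1]
    have hd : f (seq (n + 1)) ≤ f (seq n) - δ * G ^ 2 := by rw [hseqS n]; exact descent _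
    set a := f (seq n)
    set b := f (seq (n + 1))
    have ha0 : 0 ≤ a := hf0 _
    have hb0 : 0 ≤ b := hf0 _
    have hPLx : G ^ 2 ≥ 2 * μ * a := hPL _
    rw [hstep]
    rcases eq_or_lt_of_le ha0 with h0 | hapos
    · have hG0' : G = 0 := by
        have hG2 : G ^ 2 ≤ 0 := by nlinarith
        have : G ≤ 0 := by nlinarith
        linarith
      have hb0' : b = 0 := by nlinarith
      simp [hG0', hb0', ← h0]
    · set s := Real.sqrt a with hs
      set t := Real.sqrt b with ht
      have hs2 : s ^ 2 = a := Real.sq_sqrt ha0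
      have ht2 : t ^ 2 = b := Real.sq_sqrt hb0
      have hspos : 0 < s := Real.sqrt_pos.2 hapos
      have ht0 : 0 ≤ t := Real.sqrt_nonneg _
      have hts : t ≤ s := Real.sqrt_le_sqrt (by nlinarith)
      -- G ≥ 2 m s
      have hGms : 2 * m * s ≤ G := by
        nlinarith [sq_nonneg (G - 2 * m * s)]
      have key1 : (s - t) * (2 * s) ≥ δ * G * (2 * m * s) := by
        calc δ * G * (2 * m * s) ≤ δ * G * G := by
              apply mul_le_mul_of_nonneg_left hGms (by positivity)
          _ ≤ s ^ 2 - t ^ 2 := by nlinarith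
          _ = (s - t) * (s + t) := by ring
          _ ≤ (s - t) * (2 * s) := by
              apply mul_le_mul_of_nonneg_left (by linarith) (by linarith)
      have : δ * m * G ≤ s - t := by
        have h2s : 0 < 2 * s := by linarith
        rw [ge_iff_le, ← sub_nonneg] at key1
        nlinarith [key1]
      calc c * (η * G) = δ * m * G := by rw [hcdef, hδdef]; ring
        _ ≤ s - t := this
  -- telescoping
  have tele : ∀ n, c * ‖y - seq n‖ ≤ Real.sqrt (f y) - Real.sqrt (f (seq n)) := by
    intro n
    induction n with
    | zero => simp [hseq0]
    | succ n ih =>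
      have htri : ‖y - seq (n + 1)‖ ≤ ‖y - seq n‖ + ‖seq (n + 1) - seq n‖ := by
        have := norm_sub_le_norm_sub_add_norm_sub y (seq n) (seq (n + 1))
        rw [norm_sub_rev (seq n) (seq (n+1))] at this
        exact this
      have := step n
      nlinarith [mul_le_mul_of_nonneg_left htri hc.le]
  -- geometric decay
  set r : ℝ := 1 - 2 * μ * δ with hr
  have hr0 : 0 ≤ r := by
    have : 2 * μ * δ ≤ 2 * μ * η := by nlinarith
    rw [hr]; linarith
  have hr1 : r < 1 := by
    have : 0 < 2 * μ * δ := by positivity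
    rw [hr]; linarith
  have geo : ∀ n, f (seq n) ≤ r ^ n * f y := by
    intro n
    induction n with
    | zero => simp [hseq0]
    | succ n ih =>
      have h1 : f (seq (n + 1)) ≤ f (seq n) - δ * ‖gradient g (seq n)‖ ^ 2 := by
        rw [hseqS n]; exact descent _
      have h2 : ‖gradient g (seq n)‖ ^ 2 ≥ 2 * μ * f (seq n) := hPL _
      have h3 : f (seq (n + 1)) ≤ r * f (seq n) := by rw [hr]; nlinarith
      calc f (seq (n + 1)) ≤ r * f (seq n) := h3
        _ ≤ r * (r ^ n * f y) := by apply mul_le_mul_of_nonneg_left ih hr0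
        _ = r ^ (n + 1) * f y := by ring
  -- f (seq n) → 0
  have hlim : Filter.Tendsto (fun n => f (seq n)) Filter.atTop (nhds 0) := by
    have hupper : Filter.Tendsto (fun n : ℕ => r ^ n * f y) Filter.atTop (nhds 0) := by
      have := (tendsto_pow_atTop_nhds_zero_of_lt_one hr0 hr1).mul_const (f y)
      simpa using this
    exact tendsto_of_tendsto_of_tendsto_of_le_of_le tendsto_const_nhds hupper
      (fun n => hf0 _) (fun n => geo n)
  -- boundedness and subsequence
  set R : ℝ := Real.sqrt (f y) / c with hR
  have hball : ∀ n, seq n ∈ Metric.closedBall y R := by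
    intro n
    rw [Metric.mem_closedBall, dist_comm, dist_eq_norm]
    rw [hR, le_div_iff₀ hc]
    have := tele n
    have := Real.sqrt_nonneg (f (seq n))
    linarith [mul_comm c ‖y - seq n‖ ▸ tele n]
  obtain ⟨z, hzball, φ, hφ, hconv⟩ :=
    tendsto_subseq_of_bounded Metric.isBounded_closedBall hball
  have hfz : f z = 0 := by
    have h1 : Filter.Tendsto (fun k => f (seq (φ k))) Filter.atTop (nhds (f z)) := by
      have hcont : Continuous f := (hdiff.continuous).sub continuous_const
      exact (hcont.continuousAt.tendsto.comp hconv)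
    have h2 : Filter.Tendsto (fun k => f (seq (φ k))) Filter.atTop (nhds 0) :=
      hlim.comp hφ.tendsto_atTop
    exact tendsto_nhds_unique h1 h2
  have hzS : z ∈ S := by
    rw [hS]
    intro w
    have : g z = g y₀ := by have := hfz; simp only [hf] at this; linarith
    rw [this]; exact hmin w
  have hyz : dist y z ≤ R := by
    have h1 : Filter.Tendsto (fun k => dist y (seq (φ k))) Filter.atTop (nhds (dist y z)) :=
      ((continuous_const.dist continuous_id).continuousAt.tendsto.comp hconv)
    apply le_of_tendsto h1
    filter_upwards with k
    have := hball (φ k)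
    rw [Metric.mem_closedBall, dist_comm] at this
    exact this
  have hinfle : Metric.infDist y S ≤ R := le_trans (Metric.infDist_le_dist_of_mem hzS) hyz
  have hinf0 : 0 ≤ Metric.infDist y S := Metric.infDist_nonneg
  calc (1 - η * L / 2) * m * Metric.infDist y S = c * Metric.infDist y S := by rw [hcdef]
    _ ≤ c * R := mul_le_mul_of_nonneg_left hinfle hc.le
    _ = Real.sqrt (f y) := by rw [hR]; field_simp

theorem stmt_1 {p : ℕ} (g : EuclideanSpace ℝ (Fin p) → ℝ) (μ L : ℝ) (hμ : 0 < μ)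
    (hdiff : Differentiable ℝ g)
    (hLip : ∀ y₁ y₂, ‖gradient g y₁ - gradient g y₂‖ ≤ L * ‖y₁ - y₂‖)
    (S : Set (EuclideanSpace ℝ (Fin p)))
    (hS : S = {y | ∀ z, g y ≤ g z}) (hne : S.Nonempty) (hcl : IsClosed S)
    (hPL : ∀ y, ‖gradient g y‖ ^ 2 ≥ 2 * μ * (g y - ⨅ z, g z)) :
    ∀ y, ∃ ystar ∈ S, ‖gradient g y‖ ≥ μ * ‖y - ystar‖ := by
  intro y
  obtain ⟨y₀, hy₀⟩ := hne
  have hmin : ∀ z, g y₀ ≤ g z := by rw [hS] at hy₀; exact hy₀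
  have hinf : (⨅ z, g z) = g y₀ := by
    apply le_antisymm
    · exact ciInf_le ⟨g y₀, by rintro _ ⟨z, rfl⟩; exact hmin z⟩ y₀
    · exact le_ciInf hmin
  have hPL' : ∀ x, ‖gradient g x‖ ^ 2 ≥ 2 * μ * (g x - g y₀) := by
    intro x; have := hPL x; rw [hinf] at this; exact this
  -- nearest point
  obtain ⟨ystar, hystar, hdist⟩ := hcl.exists_infDist_eq_dist ⟨y₀, hy₀⟩ y
  refine ⟨ystar, hystar, ?_⟩
  have hDeq : ‖y - ystar‖ = Metric.infDist y S := by rw [hdist, dist_eq_norm]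
  rw [hDeq]
  set D := Metric.infDist y S with hD
  set G := ‖gradient g y‖ with hGdef
  have hG0 : 0 ≤ G := norm_nonneg _
  have hD0 : 0 ≤ D := Metric.infDist_nonneg
  -- L' := max L 1
  set L' : ℝ := max L 1 with hL'
  have hL'pos : 0 < L' := lt_max_of_lt_right one_pos
  have hLip' : ∀ y₁ y₂, ‖gradient g y₁ - gradient g y₂‖ ≤ L' * ‖y₁ - y₂‖ := fun y₁ y₂ =>
    le_trans (hLip y₁ y₂) (mul_le_mul_of_nonneg_right (le_max_left L 1) (norm_nonneg _))
  set m : ℝ := Real.sqrt (μ / 2) with hm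
  have hm0 : 0 < m := Real.sqrt_pos.2 (by positivity)
  -- √(2μ (g y - g y₀)) ≤ G
  have hfy0 : 0 ≤ g y - g y₀ := sub_nonneg.2 (hmin y)
  have hsq : Real.sqrt (2 * μ) * Real.sqrt (g y - g y₀) ≤ G := by
    rw [← Real.sqrt_mul (by positivity)]
    have : 2 * μ * (g y - g y₀) ≤ G ^ 2 := hPL' y
    calc Real.sqrt (2 * μ * (g y - g y₀)) ≤ Real.sqrt (G ^ 2) := Real.sqrt_le_sqrt this
      _ = G := by rw [Real.sqrt_sq hG0]
  have hmm : m * Real.sqrt (2 * μ) = μ := by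
    rw [hm, ← Real.sqrt_mul (by positivity)]
    have : μ / 2 * (2 * μ) = μ ^ 2 := by ring
    rw [this, Real.sqrt_sq hμ.le]
  -- main inequality for every admissible η
  set η₀ : ℝ := min (1 / L') (1 / (2 * μ)) with hη₀
  have hη₀pos : 0 < η₀ := lt_min (by positivity) (by positivity)
  have main : ∀ η : ℝ, 0 < η → η ≤ η₀ → (1 - η * L' / 2) * (μ * D) ≤ G := by
    intro η hη hη'
    have h1 := key hμ hL'pos hdiff hLip' hmin hPL' hS y hη
      (le_trans hη' (min_le_left _ _)) (le_trans hη' (min_le_right _ _))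
    -- h1 : (1 - η * L' / 2) * m * D ≤ √(g y - g y₀)
    have h2 := mul_le_mul_of_nonneg_left h1 (Real.sqrt_nonneg (2 * μ))
    calc (1 - η * L' / 2) * (μ * D)
        = Real.sqrt (2 * μ) * ((1 - η * L' / 2) * m * D) := by
          conv_lhs => rw [← hmm]
          ring
      _ ≤ Real.sqrt (2 * μ) * Real.sqrt (g y - g y₀) := h2
      _ ≤ G := hsq
  -- take η → 0
  have hseqlim : Filter.Tendsto
      (fun n : ℕ => (1 - η₀ * (1 / (n + 1)) * L' / 2) * (μ * D)) Filter.atTop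
      (nhds (μ * D)) := by
    have t1 : Filter.Tendsto (fun n : ℕ => (1:ℝ) / (n + 1)) Filter.atTop (nhds 0) :=
      tendsto_one_div_add_atTop_nhds_zero_nat
    have t2 : Filter.Tendsto (fun n : ℕ => (1 - η₀ * (1 / (n + 1)) * L' / 2)) Filter.atTop
        (nhds 1) := by
      have := ((t1.const_mul η₀).mul_const L').div_const 2
      have t3 := this.const_sub 1
      simpa using t3
    simpa using t2.mul_const (μ * D)
  have hle : μ * D ≤ G := by
    apply le_of_tendsto hseqlim
    filter_upwards with n
    apply main
    · have : (0:ℝ) < 1 / (n + 1) := by positivity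
      positivity
    · have h1 : (1:ℝ) / (n + 1) ≤ 1 := by
        rw [div_le_one (by positivity)]
        have : (0:ℝ) ≤ (n:ℝ) := Nat.cast_nonneg n
        linarith
      exact mul_le_of_le_one_right hη₀pos.le h1
  exact hle
end

section
/- Let R: R^p -> R be μ-strongly convex and L_g-smooth, and let Λ = {v : ‖v‖ ≤ r_v} be a closed ball containing the unconstrained minimizer v* of R. Consider the projected gradient step v⁺ = P_Λ(v - τ h) where h is an approximate gradient with ‖h - ∇R(v)‖² ≤ ε². If 0 < τ ≤ 1/(6 L_g), then ‖v⁺ - v*‖² ≤ (1 - μτ/2)‖v - v*‖² - (3/4)‖v⁺ - v‖² + (4τ/μ) ε². -/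
open scoped RealInnerProductSpace
open Filter Topology

section Aux

variable {F : Type*} [NormedAddCommGroup F] [InnerProductSpace ℝ F] [CompleteSpace F]

private lemma chain_deriv (R : F → ℝ) (hdiff : Differentiable ℝ R) (x d : F) (t : ℝ) :
    HasDerivAt (fun s : ℝ => R (x + s • d)) ⟪gradient R (x + t • d), d⟫ t := by
  have hγ : HasDerivAt (fun s : ℝ => x + s • d) d t := by
    simpa using ((hasDerivAt_id t).smul_const d).const_add x
  have hg : HasFDerivAt R (InnerProductSpace.toDual ℝ F (gradient R (x + t • d))) (x + t • d) :=
    hasGradientAt_iff_hasFDerivAt.1 (hdiff _).hasGradientAt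
  have hc := hg.comp_hasDerivAt t hγ
  rw [InnerProductSpace.toDual_apply_apply] at hc
  exact hc

private lemma descent_lemma (R : F → ℝ) (Lg : ℝ) (hLg : 0 < Lg) (hdiff : Differentiable ℝ R)
    (hsmooth : ∀ v w, ‖gradient R v - gradient R w‖ ≤ Lg * ‖v - w‖) (v w : F) :
    R w ≤ R v + ⟪gradient R v, w - v⟫ + Lg / 2 * ‖w - v‖ ^ 2 := by
  set d := w - v with hd
  have hgc : Continuous (gradient R) := by
    have : LipschitzWith ⟨Lg, hLg.le⟩ (gradient R) := by
      apply LipschitzWith.of_dist_le_mul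
      intro a b
      rw [dist_eq_norm, dist_eq_norm]; exact hsmooth a b
    exact this.continuous
  have hφ' : Continuous fun t : ℝ => ⟪gradient R (v + t • d), d⟫ := by
    exact (hgc.comp (by continuity)).inner continuous_const
  have hderiv : ∀ t ∈ Set.uIcc (0:ℝ) 1, HasDerivAt (fun s : ℝ => R (v + s • d))
      ⟪gradient R (v + t • d), d⟫ t := fun t _ => chain_deriv R hdiff v d t
  have hint : ∫ t in (0:ℝ)..1, ⟪gradient R (v + t • d), d⟫
      = R (v + (1:ℝ) • d) - R (v + (0:ℝ) • d) :=
    intervalIntegral.integral_eq_sub_of_hasDerivAt hderiv (hφ'.intervalIntegrable 0 1)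
  have hbound : ∫ t in (0:ℝ)..1, ⟪gradient R (v + t • d), d⟫
      ≤ ∫ t in (0:ℝ)..1, (⟪gradient R v, d⟫ + (Lg * ‖d‖ ^ 2) * t) := by
    apply intervalIntegral.integral_mono_on (by norm_num) (hφ'.intervalIntegrable 0 1)
    · exact (continuous_const.add (continuous_const.mul continuous_id)).intervalIntegrable 0 1
    · intro t ht
      have hsub : ⟪gradient R (v + t • d) - gradient R v, d⟫
          = ⟪gradient R (v + t • d), d⟫ - ⟪gradient R v, d⟫ := inner_sub_left _ _ _
      have hb : ⟪gradient R (v + t • d) - gradient R v, d⟫ ≤ Lg * ‖d‖ ^ 2 * t := by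
        calc ⟪gradient R (v + t • d) - gradient R v, d⟫
            ≤ ‖gradient R (v + t • d) - gradient R v‖ * ‖d‖ := real_inner_le_norm _ _
          _ ≤ (Lg * ‖(v + t • d) - v‖) * ‖d‖ :=
              mul_le_mul_of_nonneg_right (hsmooth _ _) (norm_nonneg _)
          _ = Lg * (|t| * ‖d‖) * ‖d‖ := by
              rw [add_sub_cancel_left, norm_smul, Real.norm_eq_abs]
          _ = Lg * ‖d‖ ^ 2 * t := by rw [abs_of_nonneg ht.1]; ring
      linarith
  have hval : ∫ t in (0:ℝ)..1, (⟪gradient R v, d⟫ + (Lg * ‖d‖ ^ 2) * t)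
      = ⟪gradient R v, d⟫ + (Lg * ‖d‖ ^ 2) / 2 := by
    have i1 : IntervalIntegrable (fun _ : ℝ => ⟪gradient R v, d⟫)
        MeasureTheory.volume 0 1 := intervalIntegrable_const
    have i2 : IntervalIntegrable (fun t : ℝ => (Lg * ‖d‖ ^ 2) * t)
        MeasureTheory.volume 0 1 := (continuous_const.mul continuous_id).intervalIntegrable 0 1
    rw [intervalIntegral.integral_add i1 i2,
      intervalIntegral.integral_const_mul, integral_id]
    simp
    ring
  have h10 : v + (1:ℝ) • d = w := by rw [one_smul, hd]; abel
  have h00 : v + (0:ℝ) • d = v := by rw [zero_smul, add_zero]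
  rw [h10, h00] at hint
  rw [hval] at hbound
  have : R w - R v ≤ ⟪gradient R v, d⟫ + (Lg * ‖d‖ ^ 2) / 2 := by linarith
  have hfin : Lg / 2 * ‖w - v‖ ^ 2 = (Lg * ‖d‖ ^ 2) / 2 := by rw [← hd]; ring
  rw [hd] at this ⊢
  linarith

private lemma sc_lower (R : F → ℝ) (μ : ℝ) (hdiff : Differentiable ℝ R)
    (hsc : StrongConvexOn Set.univ μ R) (x y : F) :
    R x + ⟪gradient R x, y - x⟫ + μ / 2 * ‖y - x‖ ^ 2 ≤ R y := by
  have hq : HasDerivAt (fun t : ℝ => R (x + t • (y - x))) ⟪gradient R x, y - x⟫ 0 := by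
    simpa using chain_deriv R hdiff x (y - x) 0
  have hslope : Tendsto (slope (fun t : ℝ => R (x + t • (y - x))) 0) (𝓝[>] 0)
      (𝓝 ⟪gradient R x, y - x⟫) :=
    (hasDerivAt_iff_tendsto_slope.1 hq).mono_left
      (nhdsWithin_mono 0 fun t ht => ne_of_gt ht)
  have hRHS : Tendsto (fun t : ℝ => R y - R x - (1 - t) * (μ / 2 * ‖y - x‖ ^ 2)) (𝓝[>] 0)
      (𝓝 (R y - R x - μ / 2 * ‖y - x‖ ^ 2)) := by
    have hc : Continuous (fun t : ℝ => R y - R x - (1 - t) * (μ / 2 * ‖y - x‖ ^ 2)) := by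
      continuity
    have := (hc.tendsto 0).mono_left (nhdsWithin_le_nhds (s := Set.Ioi (0:ℝ)))
    simpa using this
  have hev : ∀ᶠ t in 𝓝[>] (0:ℝ), slope (fun t : ℝ => R (x + t • (y - x))) 0 t
      ≤ R y - R x - (1 - t) * (μ / 2 * ‖y - x‖ ^ 2) := by
    filter_upwards [Ioo_mem_nhdsGT_of_mem
      (by constructor <;> norm_num : (0:ℝ) ∈ Set.Ico (0:ℝ) 1)] with t ht
    have ht0 : 0 < t := ht.1
    have ht1 : t < 1 := ht.2
    have key := hsc.2 (Set.mem_univ y) (Set.mem_univ x) ht0.le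
      (by linarith : (0:ℝ) ≤ 1 - t) (by ring)
    have hxy : t • y + (1 - t) • x = x + t • (y - x) := by module
    rw [hxy] at key
    simp only [smul_eq_mul] at key
    rw [slope_def_field]
    simp only [zero_smul, add_zero, sub_zero]
    rw [div_le_iff₀ ht0]
    nlinarith [key]
  have hle : ⟪gradient R x, y - x⟫ ≤ R y - R x - μ / 2 * ‖y - x‖ ^ 2 :=
    le_of_tendsto_of_tendsto hslope hRHS hev
  linarith

private lemma proj_vi (rv : ℝ) (hrv : 0 ≤ rv) (z vplus : F) (hvp : ‖vplus‖ ≤ rv)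
    (hmin : ∀ u : F, ‖u‖ ≤ rv → ‖z - vplus‖ ≤ ‖z - u‖) (u : F) (hu : ‖u‖ ≤ rv) :
    ⟪z - vplus, u - vplus⟫ ≤ 0 := by
  have hK : Convex ℝ (Metric.closedBall (0:F) rv) := convex_closedBall 0 rv
  have hvpK : vplus ∈ Metric.closedBall (0:F) rv := mem_closedBall_zero_iff.2 hvp
  haveI : Nonempty (Metric.closedBall (0:F) rv) := ⟨⟨vplus, hvpK⟩⟩
  have heq : ‖z - vplus‖ = ⨅ w : Metric.closedBall (0:F) rv, ‖z - w‖ := by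
    apply le_antisymm
    · exact le_ciInf fun w => hmin w (mem_closedBall_zero_iff.1 w.2)
    · refine ciInf_le ⟨0, ?_⟩ (⟨vplus, hvpK⟩ : Metric.closedBall (0:F) rv)
      rintro x ⟨w, rfl⟩
      exact norm_nonneg _
  exact (norm_eq_iInf_iff_real_inner_le_zero hK hvpK).1 heq u (mem_closedBall_zero_iff.2 hu)

end Aux

set_option maxHeartbeats 1600000 in
theorem stmt_6 {p : ℕ} (R : EuclideanSpace ℝ (Fin p) → ℝ) (μ Lg rv τ ε : ℝ)
    (hμ : 0 < μ) (hμL : μ ≤ Lg)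
    (hdiff : Differentiable ℝ R)
    (hsc : StrongConvexOn Set.univ μ R)
    (hsmooth : ∀ v w, ‖gradient R v - gradient R w‖ ≤ Lg * ‖v - w‖)
    (vstar : EuclideanSpace ℝ (Fin p)) (hmin : ∀ u, R vstar ≤ R u) (hvstar : ‖vstar‖ ≤ rv)
    (v h vplus : EuclideanSpace ℝ (Fin p)) (hv : ‖v‖ ≤ rv)
    (hh : ‖h - gradient R v‖ ^ 2 ≤ ε ^ 2)
    (hτ : 0 < τ) (hτ' : τ ≤ 1 / (6 * Lg))
    (hproj₁ : ‖vplus‖ ≤ rv)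
    (hproj₂ : ∀ u : EuclideanSpace ℝ (Fin p), ‖u‖ ≤ rv →
      ‖v - τ • h - vplus‖ ≤ ‖v - τ • h - u‖) :
    ‖vplus - vstar‖ ^ 2 ≤ (1 - μ * τ / 2) * ‖v - vstar‖ ^ 2
      - 3 / 4 * ‖vplus - v‖ ^ 2 + 4 * τ / μ * ε ^ 2 := by
  have hLg : 0 < Lg := lt_of_lt_of_le hμ hμL
  have hrv : 0 ≤ rv := (norm_nonneg vstar).trans hvstar
  set g := gradient R v with hgdef
  -- scalar facts
  have hτLg : τ * Lg ≤ 1 / 6 := by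
    have h6 : (0:ℝ) < 6 * Lg := by linarith
    have := (le_div_iff₀ h6).1 hτ'
    linarith
  have hτμ : τ * μ ≤ 1 / 6 := by
    have h6 : (0:ℝ) < 6 * μ := by linarith
    have hmono : 1 / (6 * Lg) ≤ 1 / (6 * μ) :=
      one_div_le_one_div_of_le h6 (by linarith)
    have := (le_div_iff₀ h6).1 (hτ'.trans hmono)
    linarith
  -- variational inequality
  have hvi : ⟪(v - τ • h) - vplus, vstar - vplus⟫ ≤ 0 :=
    proj_vi rv hrv (v - τ • h) vplus hproj₁ hproj₂ vstar hvstar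
  have h1 : ⟪vplus - v, vplus - vstar⟫ + τ * ⟪h, vplus - vstar⟫ ≤ 0 := by
    have e : ⟪(v - τ • h) - vplus, vstar - vplus⟫
        = ⟪vplus - v, vplus - vstar⟫ + τ * ⟪h, vplus - vstar⟫ := by
      rw [show (v - τ • h) - vplus = -((vplus - v) + τ • h) by module,
        show vstar - vplus = -(vplus - vstar) by abel,
        inner_neg_neg, inner_add_left, real_inner_smul_left]
    rw [e] at hvi
    exact hvi
  -- algebraic identities
  have E1 : ‖vplus - vstar‖ ^ 2
      = ‖v - vstar‖ ^ 2 + 2 * ⟪v - vstar, vplus - v⟫ + ‖vplus - v‖ ^ 2 := by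
    rw [show vplus - vstar = (v - vstar) + (vplus - v) by abel, norm_add_sq_real]
  have E2 : ⟪vplus - v, vplus - vstar⟫ = ⟪vplus - v, v - vstar⟫ + ‖vplus - v‖ ^ 2 := by
    rw [show vplus - vstar = (v - vstar) + (vplus - v) by abel, inner_add_right,
      real_inner_self_eq_norm_sq]
  have E3 : ⟪v - vstar, vplus - v⟫ = ⟪vplus - v, v - vstar⟫ := real_inner_comm _ _
  have step1 : ‖vplus - vstar‖ ^ 2
      ≤ ‖v - vstar‖ ^ 2 - ‖vplus - v‖ ^ 2 - 2 * (τ * ⟪h, vplus - vstar⟫) := by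
    linarith
  have E4 : ⟪h, vplus - vstar⟫
      = ⟪g, vplus - v⟫ + ⟪g, v - vstar⟫ + ⟪h - g, vplus - v⟫ + ⟪h - g, v - vstar⟫ := by
    have d1 : ∀ w : EuclideanSpace ℝ (Fin p), ⟪h, w⟫ = ⟪g, w⟫ + ⟪h - g, w⟫ := fun w => by
      rw [inner_sub_left]; ring
    calc ⟪h, vplus - vstar⟫ = ⟪h, vplus - v⟫ + ⟪h, v - vstar⟫ := by
          rw [← inner_add_right]; congr 1; abel
      _ = _ := by rw [d1 (vplus - v), d1 (v - vstar)]; ring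
  have E4' : τ * ⟪h, vplus - vstar⟫
      = τ * ⟪g, vplus - v⟫ + τ * ⟪g, v - vstar⟫
        + τ * ⟪h - g, vplus - v⟫ + τ * ⟪h - g, v - vstar⟫ := by
    rw [E4]; ring
  -- function value bounds
  have F1 : R vplus ≤ R v + ⟪g, vplus - v⟫ + Lg / 2 * ‖vplus - v‖ ^ 2 :=
    descent_lemma R Lg hLg hdiff hsmooth v vplus
  have F2 : R v + -⟪g, v - vstar⟫ + μ / 2 * ‖v - vstar‖ ^ 2 ≤ R vstar := by
    have := sc_lower R μ hdiff hsc v vstar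
    rwa [show vstar - v = -(v - vstar) by abel, inner_neg_right, norm_neg] at this
  have hG : μ / 2 * ‖v - vstar‖ ^ 2 - Lg / 2 * ‖vplus - v‖ ^ 2
      ≤ ⟪g, vplus - v⟫ + ⟪g, v - vstar⟫ := by
    have := hmin vplus
    linarith
  have hGτ := mul_le_mul_of_nonneg_left hG hτ.le
  -- Cauchy-Schwarz bounds
  have CS1 : -(‖h - g‖ * ‖v - vstar‖) ≤ ⟪h - g, v - vstar⟫ :=
    neg_le_of_abs_le (abs_real_inner_le_norm _ _)
  have CS2 : -(‖h - g‖ * ‖vplus - v‖) ≤ ⟪h - g, vplus - v⟫ :=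
    neg_le_of_abs_le (abs_real_inner_le_norm _ _)
  have τCS1 := mul_le_mul_of_nonneg_left CS1 hτ.le
  have τCS2 := mul_le_mul_of_nonneg_left CS2 hτ.le
  -- Young inequalities
  have Y1τ : τ * (‖h - g‖ * ‖v - vstar‖)
      ≤ μ * τ / 4 * ‖v - vstar‖ ^ 2 + τ / μ * ‖h - g‖ ^ 2 := by
    rw [← sub_nonneg]
    have key : μ * τ / 4 * ‖v - vstar‖ ^ 2 + τ / μ * ‖h - g‖ ^ 2
          - τ * (‖h - g‖ * ‖v - vstar‖)
        = τ * (μ * ‖v - vstar‖ - 2 * ‖h - g‖) ^ 2 / (4 * μ) := by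
      field_simp
      ring
    rw [key]
    exact div_nonneg (mul_nonneg hτ.le (sq_nonneg _)) (by linarith)
  have Y2τ : τ * (‖h - g‖ * ‖vplus - v‖)
      ≤ 1 / 24 * ‖vplus - v‖ ^ 2 + 6 * τ ^ 2 * ‖h - g‖ ^ 2 := by
    rw [← sub_nonneg]
    have key : 1 / 24 * ‖vplus - v‖ ^ 2 + 6 * τ ^ 2 * ‖h - g‖ ^ 2
          - τ * (‖h - g‖ * ‖vplus - v‖)
        = (‖vplus - v‖ - 12 * τ * ‖h - g‖) ^ 2 / 24 := by ring
    rw [key]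
    positivity
  -- remaining scalar bounds
  have h12 : 12 * τ ^ 2 ≤ 2 * (τ / μ) := by
    rw [show 2 * (τ / μ) = 2 * τ / μ by ring, le_div_iff₀ hμ]
    nlinarith [mul_le_mul_of_nonneg_left hτμ (by linarith : (0:ℝ) ≤ 12 * τ)]
  have h12e : 12 * τ ^ 2 * ‖h - g‖ ^ 2 ≤ 2 * (τ / μ) * ‖h - g‖ ^ 2 :=
    mul_le_mul_of_nonneg_right h12 (sq_nonneg _)
  have hee : 4 * (τ / μ) * ‖h - g‖ ^ 2 ≤ 4 * (τ / μ) * ε ^ 2 := by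
    have h4 : (0:ℝ) ≤ 4 * (τ / μ) := by
      have : (0:ℝ) ≤ τ / μ := div_nonneg hτ.le hμ.le
      linarith
    exact mul_le_mul_of_nonneg_left hh h4
  have hLgc : τ * Lg * ‖vplus - v‖ ^ 2 ≤ 1 / 6 * ‖vplus - v‖ ^ 2 :=
    mul_le_mul_of_nonneg_right hτLg (sq_nonneg _)
  obtain ⟨K, hK⟩ : ∃ K : ℝ, τ / μ = K := ⟨_, rfl⟩
  rw [show 4 * τ / μ * ε ^ 2 = 4 * (τ / μ) * ε ^ 2 by ring, hK]
  rw [hK] at Y1τ h12e hee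
  linarith only [step1, E4', hGτ, τCS1, τCS2, Y1τ, Y2τ, h12e, hee, hLgc]
end

section
/- Let F: R^d -> R be differentiable with L_F-Lipschitz gradient and φ: R^d -> R ∪ {+∞} convex. Define the proximal step x⁺ = argmin_x { ⟨w, x⟩ + (1/(2γ))‖x - x_0‖² + φ(x) } for a vector w ∈ R^d, and the gradient mapping G = (x_0 - x⁺)/γ. If 0 < γ ≤ 1/(2 L_F), then F(x⁺) + φ(x⁺) ≤ F(x_0) + φ(x_0) - (γ/2)‖G‖² + γ‖w - ∇F(x_0)‖². -/
set_option maxHeartbeats 1000000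

open scoped RealInnerProductSpace

lemma descent_aux {d : ℕ} (F : EuclideanSpace ℝ (Fin d) → ℝ) (LF : ℝ) (hLF : 0 ≤ LF)
    (hF : Differentiable ℝ F)
    (hLip : ∀ x y, ‖gradient F x - gradient F y‖ ≤ LF * ‖x - y‖)
    (x y : EuclideanSpace ℝ (Fin d)) :
    F y ≤ F x + ⟪gradient F x, y - x⟫ + LF / 2 * ‖y - x‖ ^ 2 := by
  set v := y - x with hv
  have hgcont : Continuous (gradient F) := by
    have : LipschitzWith (Real.toNNReal LF) (gradient F) := by
      apply LipschitzWith.of_dist_le_mul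
      intro a b
      simpa [dist_eq_norm, Real.coe_toNNReal LF hLF] using hLip a b
    exact this.continuous
  have hline : Continuous (fun t : ℝ => x + t • v) :=
    continuous_const.add (continuous_id.smul continuous_const)
  have hcont : Continuous (fun t : ℝ => ⟪gradient F (x + t • v), v⟫) :=
    (hgcont.comp hline).inner continuous_const
  have hd : ∀ t : ℝ, HasDerivAt (fun s : ℝ => F (x + s • v))
      ⟪gradient F (x + t • v), v⟫ t := by
    intro t
    have h1 : HasFDerivAt F ((InnerProductSpace.toDual ℝ _) (gradient F (x + t • v)))
        (x + t • v) := hasGradientAt_iff_hasFDerivAt.mp (hF _).hasGradientAt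
    have h2 : HasDerivAt (fun s : ℝ => x + s • v) v t := by
      simpa using ((hasDerivAt_id t).smul_const v).const_add x
    exact (h1.comp_hasDerivAt t h2).congr_deriv rfl
  have hftc : ∫ t in (0:ℝ)..1, ⟪gradient F (x + t • v), v⟫
      = F (x + (1:ℝ) • v) - F (x + (0:ℝ) • v) :=
    intervalIntegral.integral_eq_sub_of_hasDerivAt (fun t _ => hd t)
      (hcont.intervalIntegrable 0 1)
  have h01 : F y - F x = ∫ t in (0:ℝ)..1, ⟪gradient F (x + t • v), v⟫ := by
    rw [hftc]; simp [hv]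
  have hmono : ∫ t in (0:ℝ)..1, ⟪gradient F (x + t • v), v⟫ ≤
      ∫ t in (0:ℝ)..1, (⟪gradient F x, v⟫ + LF * t * ‖v‖ ^ 2) := by
    apply intervalIntegral.integral_mono_on zero_le_one (hcont.intervalIntegrable 0 1)
    · exact Continuous.intervalIntegrable (by fun_prop) 0 1
    · intro t ht
      have h1 : ⟪gradient F (x + t • v) - gradient F x, v⟫ ≤
          ‖gradient F (x + t • v) - gradient F x‖ * ‖v‖ := real_inner_le_norm _ _
      have h2 : ‖gradient F (x + t • v) - gradient F x‖ ≤ LF * (t * ‖v‖) := by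
        have := hLip (x + t • v) x
        simpa [norm_smul, abs_of_nonneg ht.1] using this
      have h3 : ⟪gradient F (x + t • v), v⟫ - ⟪gradient F x, v⟫ =
          ⟪gradient F (x + t • v) - gradient F x, v⟫ := by
        rw [inner_sub_left]
      have h4 : ‖gradient F (x + t • v) - gradient F x‖ * ‖v‖ ≤ LF * (t * ‖v‖) * ‖v‖ :=
        mul_le_mul_of_nonneg_right h2 (norm_nonneg _)
      nlinarith [h1]
  have hval : ∫ t in (0:ℝ)..1, (⟪gradient F x, v⟫ + LF * t * ‖v‖ ^ 2) =
      ⟪gradient F x, v⟫ + LF / 2 * ‖v‖ ^ 2 := by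
    have heq : (fun t : ℝ => LF * t * ‖v‖ ^ 2) = fun t : ℝ => (LF * ‖v‖ ^ 2) * t := by
      funext t; ring
    have hi1 : IntervalIntegrable (fun _ : ℝ => ⟪gradient F x, v⟫)
        MeasureTheory.volume 0 1 := Continuous.intervalIntegrable continuous_const 0 1
    have hi2 : IntervalIntegrable (fun t : ℝ => LF * t * ‖v‖ ^ 2)
        MeasureTheory.volume 0 1 := Continuous.intervalIntegrable (by fun_prop) 0 1
    rw [intervalIntegral.integral_add hi1 hi2, intervalIntegral.integral_const,
      heq, intervalIntegral.integral_const_mul, integral_id, sub_zero, one_smul]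
    ring
  linarith [h01, hmono, hval.le, hval.ge]

theorem stmt_7 {d : ℕ} (F φ : EuclideanSpace ℝ (Fin d) → ℝ) (LF γ : ℝ)
    (hF : Differentiable ℝ F)
    (hLip : ∀ x y, ‖gradient F x - gradient F y‖ ≤ LF * ‖x - y‖)
    (hφ : ConvexOn ℝ Set.univ φ)
    (x0 w xplus : EuclideanSpace ℝ (Fin d))
    (hγ : 0 < γ) (hγ' : γ ≤ 1 / (2 * LF))
    (hprox : IsMinOn
      (fun x : EuclideanSpace ℝ (Fin d) => ⟪w, x⟫ + 1 / (2 * γ) * ‖x - x0‖ ^ 2 + φ x)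
      Set.univ xplus)
    (G : EuclideanSpace ℝ (Fin d)) (hG : G = γ⁻¹ • (x0 - xplus)) :
    F xplus + φ xplus ≤ F x0 + φ x0 - γ / 2 * ‖G‖ ^ 2 + γ * ‖w - gradient F x0‖ ^ 2 := by
  have hLF : 0 < LF := by
    by_contra h
    push_neg at h
    have h2 : 1 / (2 * LF) ≤ 0 := by
      rcases lt_or_eq_of_le h with h' | h'
      · exact le_of_lt (div_neg_of_pos_of_neg one_pos (by linarith))
      · rw [h']; norm_num
    linarith
  set Δ := xplus - x0 with hΔ
  -- strong prox inequality
  have hproxineq : φ xplus ≤ φ x0 + ⟪w, x0 - xplus⟫ - (1 / γ) * ‖Δ‖ ^ 2 := by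
    have key : ∀ t : ℝ, 0 < t → t ≤ 1 →
        φ xplus ≤ φ x0 + ⟪w, x0 - xplus⟫ - (1 / γ) * ‖Δ‖ ^ 2 + t * (‖Δ‖ ^ 2 / (2 * γ)) := by
      intro t ht0 ht1
      have hmin := hprox (Set.mem_univ (xplus + t • (x0 - xplus)))
      simp only [Set.mem_setOf_eq] at hmin
      have e1 : ⟪w, xplus + t • (x0 - xplus)⟫ = ⟪w, xplus⟫ + t * ⟪w, x0 - xplus⟫ := by
        rw [inner_add_right, real_inner_smul_right]
      have e2 : xplus + t • (x0 - xplus) - x0 = (1 - t) • Δ := by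
        rw [hΔ]; module
      have e3 : ‖xplus + t • (x0 - xplus) - x0‖ ^ 2 = (1 - t) ^ 2 * ‖Δ‖ ^ 2 := by
        rw [e2, norm_smul]
        simp [mul_pow, sq_abs]
      have e4 : φ (xplus + t • (x0 - xplus)) ≤ (1 - t) * φ xplus + t * φ x0 := by
        have hc := hφ.2 (Set.mem_univ xplus) (Set.mem_univ x0)
          (by linarith : (0:ℝ) ≤ 1 - t) ht0.le (by ring)
        have heq : (1 - t) • xplus + t • x0 = xplus + t • (x0 - xplus) := by module
        rw [heq] at hc
        simpa using hc
      rw [e1, e3] at hmin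
      have hmin' : ⟪w, xplus⟫ + 1 / (2 * γ) * ‖Δ‖ ^ 2 + φ xplus ≤
          ⟪w, xplus⟫ + t * ⟪w, x0 - xplus⟫ + 1 / (2 * γ) * ((1 - t) ^ 2 * ‖Δ‖ ^ 2) +
            ((1 - t) * φ xplus + t * φ x0) := by
        have hn : ‖xplus - x0‖ = ‖Δ‖ := by rw [hΔ]
        calc ⟪w, xplus⟫ + 1 / (2 * γ) * ‖Δ‖ ^ 2 + φ xplus
            = ⟪w, xplus⟫ + 1 / (2 * γ) * ‖xplus - x0‖ ^ 2 + φ xplus := by rw [hn]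
          _ ≤ _ := le_trans hmin (by linarith [e4])
      have ht' : t * φ xplus ≤ t * (φ x0 + ⟪w, x0 - xplus⟫ - (1 / γ) * ‖Δ‖ ^ 2 +
          t * (‖Δ‖ ^ 2 / (2 * γ))) := by
        have hexp : 1 / (2 * γ) * ((1 - t) ^ 2 * ‖Δ‖ ^ 2) - 1 / (2 * γ) * ‖Δ‖ ^ 2
            = t * (-(1 / γ) * ‖Δ‖ ^ 2 + t * (‖Δ‖ ^ 2 / (2 * γ))) := by
          field_simp
          ring
        nlinarith [hmin']
      exact (mul_le_mul_iff_right₀ ht0).mp ht'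
    refine le_of_forall_pos_le_add ?_
    intro ε hε
    set K := ‖Δ‖ ^ 2 / (2 * γ) with hK
    have hK0 : 0 ≤ K := by positivity
    have htpos : 0 < min 1 (ε / (K + 1)) := lt_min one_pos (by positivity)
    have ht := key (min 1 (ε / (K + 1))) htpos (min_le_left _ _)
    have hbd : min 1 (ε / (K + 1)) * K ≤ ε := by
      have h1 : min 1 (ε / (K + 1)) ≤ ε / (K + 1) := min_le_right _ _
      have h2 : ε / (K + 1) * K ≤ ε := by
        rw [div_mul_eq_mul_div, div_le_iff₀ (by linarith)]
        nlinarith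
      nlinarith [mul_le_mul_of_nonneg_right h1 hK0]
    linarith
  -- descent inequality
  have hdesc := descent_aux F LF hLF.le hF hLip x0 xplus
  -- substitutions via G
  have hx0 : x0 - xplus = γ • G := by
    rw [hG, smul_smul, mul_inv_cancel₀ (ne_of_gt hγ), one_smul]
  have hnΔ : ‖Δ‖ ^ 2 = γ ^ 2 * ‖G‖ ^ 2 := by
    have hΔ' : Δ = -(γ • G) := by rw [hΔ, ← hx0]; module
    rw [hΔ', norm_neg, norm_smul]
    simp [mul_pow, sq_abs]
  have hiw : ⟪w, x0 - xplus⟫ = γ * ⟪w, G⟫ := by rw [hx0, real_inner_smul_right]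
  have hig : ⟪gradient F x0, xplus - x0⟫ = -(γ * ⟪gradient F x0, G⟫) := by
    have h : xplus - x0 = -(γ • G) := by rw [← hx0]; module
    rw [h, inner_neg_right, real_inner_smul_right]
  have hsplit : ⟪w, G⟫ - ⟪gradient F x0, G⟫ = ⟪w - gradient F x0, G⟫ :=
    (inner_sub_left _ _ _).symm
  have hyoung : ⟪w - gradient F x0, G⟫ ≤ ‖w - gradient F x0‖ ^ 2 + ‖G‖ ^ 2 / 4 := by
    have h1 := real_inner_le_norm (w - gradient F x0) G
    nlinarith [sq_nonneg (‖w - gradient F x0‖ - ‖G‖ / 2)]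
  have hγLF : LF * γ ≤ 1 / 2 := by
    rw [le_div_iff₀ (by linarith : (0:ℝ) < 2 * LF)] at hγ'
    nlinarith
  have h5 : (1 / γ) * ‖Δ‖ ^ 2 = γ * ‖G‖ ^ 2 := by
    rw [hnΔ]; field_simp
  have h6 : LF / 2 * ‖Δ‖ ^ 2 ≤ γ / 4 * ‖G‖ ^ 2 := by
    rw [hnΔ]
    nlinarith [sq_nonneg ‖G‖, mul_nonneg hγ.le (sq_nonneg ‖G‖)]
  have hΔn : ‖xplus - x0‖ = ‖Δ‖ := by rw [hΔ]
  rw [hΔn] at hdesc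
  have hy : γ * ⟪w - gradient F x0, G⟫ ≤ γ * (‖w - gradient F x0‖ ^ 2 + ‖G‖ ^ 2 / 4) :=
    mul_le_mul_of_nonneg_left hyoung hγ.le
  nlinarith [hdesc, hproxineq, hy]
end

section
/- Let g(x,y): R^d × R^p -> R be such that ∇_y g(x, ·) is L_g-Lipschitz, ∇_y g(·, y) is L_g-Lipschitz in x, and g(x,·) satisfies the PL condition with constant μ for every x (with G(x) = min_y g(x,y)). For y_{t+1} = y_t - λ u_t with u_t = ∇_y g(x_t, y_t) and 0 < λ ≤ 1/(2 L_g), the inner-loop descent satisfies g(x_{t+1}, y_{t+1}) - G(x_{t+1}) ≤ (1 - λμ)(g(x_{t+1}, y_t) - G(x_{t+1})) - (1/(2λ))‖y_{t+1} - y_t‖² + λ L_g² ‖x_{t+1} - x_t‖² + λ‖∇_y g(x_t, y_t) - u_t‖² + (L_g/2)‖y_{t+1} - y_t‖². -/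
open scoped RealInnerProductSpace

lemma descent_aux_s10 {p : ℕ} (f : EuclideanSpace ℝ (Fin p) → ℝ) (L : ℝ)
    (hf : Differentiable ℝ f)
    (hLip : ∀ y₁ y₂, ‖gradient f y₁ - gradient f y₂‖ ≤ L * ‖y₁ - y₂‖)
    (y h : EuclideanSpace ℝ (Fin p)) :
    f (y + h) ≤ f y + ⟪gradient f y, h⟫ + L / 2 * ‖h‖ ^ 2 := by
  set φ : ℝ → ℝ := fun t => f (y + t • h) - t * ⟪gradient f y, h⟫ - t ^ 2 * (L / 2 * ‖h‖ ^ 2)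
    with hφdef
  have hcurve : ∀ t : ℝ, HasDerivAt (fun t : ℝ => y + t • h) h t := by
    intro t
    simpa using ((hasDerivAt_id t).smul_const h).const_add y
  have hder : ∀ t : ℝ, HasDerivAt φ
      (⟪gradient f (y + t • h), h⟫ - ⟪gradient f y, h⟫ - 2 * t * (L / 2 * ‖h‖ ^ 2)) t := by
    intro t
    have h1 : HasDerivAt (fun t : ℝ => f (y + t • h)) (⟪gradient f (y + t • h), h⟫) t := by
      have := ((hf (y + t • h)).hasGradientAt.hasFDerivAt).comp_hasDerivAt t (hcurve t)
      simpa [InnerProductSpace.toDual_apply_apply, Function.comp_def] using this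
    have h2 : HasDerivAt (fun t : ℝ => t * ⟪gradient f y, h⟫) (⟪gradient f y, h⟫) t := by
      simpa using (hasDerivAt_id t).mul_const (⟪gradient f y, h⟫)
    have h3 : HasDerivAt (fun t : ℝ => t ^ 2 * (L / 2 * ‖h‖ ^ 2))
        (2 * t * (L / 2 * ‖h‖ ^ 2)) t := by
      simpa [mul_comm] using (hasDerivAt_pow 2 t).mul_const (L / 2 * ‖h‖ ^ 2)
    exact (h1.sub h2).sub h3
  have hanti : AntitoneOn φ (Set.Icc (0 : ℝ) 1) := by
    apply antitoneOn_of_deriv_nonpos (convex_Icc 0 1)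
    · exact (continuous_iff_continuousAt.mpr
        (fun t => (hder t).differentiableAt.continuousAt)).continuousOn
    · intro t ht
      exact (hder t).differentiableAt.differentiableWithinAt
    · intro t ht
      rw [interior_Icc] at ht
      rw [(hder t).deriv]
      have hb : ⟪gradient f (y + t • h) - gradient f y, h⟫ ≤ t * L * ‖h‖ ^ 2 := by
        calc ⟪gradient f (y + t • h) - gradient f y, h⟫
            ≤ ‖gradient f (y + t • h) - gradient f y‖ * ‖h‖ := real_inner_le_norm _ _
          _ ≤ (L * ‖(y + t • h) - y‖) * ‖h‖ := by
              gcongr; exact hLip _ _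
          _ = t * L * ‖h‖ ^ 2 := by
              have : ‖(y + t • h) - y‖ = |t| * ‖h‖ := by
                simp [norm_smul, Real.norm_eq_abs]
              rw [this, abs_of_pos ht.1]; ring
      have := inner_sub_left (𝕜 := ℝ) (gradient f (y + t • h)) (gradient f y) h
      nlinarith [ht.1.le]
  have key := hanti (Set.left_mem_Icc.mpr zero_le_one) (Set.right_mem_Icc.mpr zero_le_one)
    zero_le_one
  simp only [hφdef] at key
  simp only [one_smul, zero_smul, add_zero, one_pow, one_mul, zero_pow, zero_mul,
    sub_zero, mul_zero] at key
  linarith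

set_option maxHeartbeats 1000000 in
theorem stmt_10 {d p : ℕ}
    (g : EuclideanSpace ℝ (Fin d) → EuclideanSpace ℝ (Fin p) → ℝ)
    (G : EuclideanSpace ℝ (Fin d) → ℝ)
    (Lg μ lam : ℝ) (hLg : 0 < Lg) (hμ : 0 < μ)
    (hdiff : ∀ x, Differentiable ℝ (g x))
    (hLipy : ∀ x y₁ y₂, ‖gradient (g x) y₁ - gradient (g x) y₂‖ ≤ Lg * ‖y₁ - y₂‖)
    (hLipx : ∀ y x₁ x₂, ‖gradient (g x₁) y - gradient (g x₂) y‖ ≤ Lg * ‖x₁ - x₂‖)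
    (hGmin : ∀ x y, G x ≤ g x y) (hGatt : ∀ x, ∃ y, g x y = G x)
    (hPL : ∀ x y, ‖gradient (g x) y‖ ^ 2 ≥ 2 * μ * (g x y - G x))
    (xt xt1 : EuclideanSpace ℝ (Fin d)) (yt ut : EuclideanSpace ℝ (Fin p))
    (hu : ut = gradient (g xt) yt)
    (hlam : 0 < lam) (hlam' : lam ≤ 1 / (2 * Lg))
    (yt1 : EuclideanSpace ℝ (Fin p)) (hy : yt1 = yt - lam • ut) :
    g xt1 yt1 - G xt1 ≤ (1 - lam * μ) * (g xt1 yt - G xt1)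
      - 1 / (2 * lam) * ‖yt1 - yt‖ ^ 2 + lam * Lg ^ 2 * ‖xt1 - xt‖ ^ 2
      + lam * ‖gradient (g xt) yt - ut‖ ^ 2 + Lg / 2 * ‖yt1 - yt‖ ^ 2 := by
  set v := gradient (g xt1) yt with hv
  set u := gradient (g xt) yt with huu
  have hstep : yt1 = yt + (-(lam • u)) := by rw [hy, hu, sub_eq_add_neg]
  have hdesc := descent_aux_s10 (g xt1) Lg (hdiff xt1) (hLipy xt1) yt (-(lam • u))
  rw [← hstep] at hdesc
  have hdy : yt1 - yt = -(lam • u) := by rw [hstep]; exact add_sub_cancel_left yt _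
  have hinner : ⟪v, -(lam • u)⟫ = -lam * ⟪v, u⟫ := by
    rw [inner_neg_right, real_inner_smul_right]; ring
  have hiden : 2 * ⟪v, u⟫ = ‖v‖ ^ 2 + ‖u‖ ^ 2 - ‖v - u‖ ^ 2 := by
    have := @norm_sub_sq_real (EuclideanSpace ℝ (Fin p)) _ _ v u
    linarith
  have hPL1 : ‖v‖ ^ 2 ≥ 2 * μ * (g xt1 yt - G xt1) := hPL xt1 yt
  have hLx : ‖v - u‖ ≤ Lg * ‖xt1 - xt‖ := hLipx yt xt1 xt
  have hLx2 : ‖v - u‖ ^ 2 ≤ Lg ^ 2 * ‖xt1 - xt‖ ^ 2 := by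
    nlinarith [norm_nonneg (v - u), norm_nonneg (xt1 - xt)]
  have hnu : ‖yt1 - yt‖ ^ 2 = lam ^ 2 * ‖u‖ ^ 2 := by
    rw [hdy]; rw [norm_neg, norm_smul, Real.norm_eq_abs, abs_of_pos hlam]; ring
  have hzero : gradient (g xt) yt - ut = 0 := by rw [hu]; exact sub_self _
  rw [hzero]
  have h2l : 1 / (2 * lam) * ‖yt1 - yt‖ ^ 2 = lam / 2 * ‖u‖ ^ 2 := by
    rw [hnu]; field_simp
  have hnn : ‖-(lam • u)‖ ^ 2 = ‖yt1 - yt‖ ^ 2 := by rw [hdy]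
  rw [hinner, hnn] at hdesc
  have hcore : -lam * ⟪v, u⟫ ≤ -(lam * μ) * (g xt1 yt - G xt1)
      - lam / 2 * ‖u‖ ^ 2 + lam / 2 * Lg ^ 2 * ‖xt1 - xt‖ ^ 2 := by
    nlinarith [hlam.le]
  have hG := hGmin xt1 yt
  simp only [norm_zero]
  have hslack : 0 ≤ lam / 2 * Lg ^ 2 * ‖xt1 - xt‖ ^ 2 := by positivity
  nlinarith [hslack]
end

section
/- Let h: R^p -> R be twice continuously differentiable, μ-PL (‖∇h(y)‖² ≥ 2μ(h(y) - min h) for all y), and L-smooth. Then at any global minimizer y* of h, every nonzero eigenvalue of ∇²h(y*) is at least μ; equivalently, λ⁺_min(∇²h(y*)) ≥ μ whenever ∇²h(y*) ≠ 0. -/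
set_option maxHeartbeats 1000000
open scoped RealInnerProductSpace

theorem stmt_19 {p : ℕ} (h : EuclideanSpace ℝ (Fin p) → ℝ) (μ L : ℝ) (hμ : 0 < μ)
    (hC2 : ContDiff ℝ 2 h)
    (hPL : ∀ y, ‖gradient h y‖ ^ 2 ≥ 2 * μ * (h y - ⨅ z, h z))
    (hLip : ∀ y₁ y₂, ‖gradient h y₁ - gradient h y₂‖ ≤ L * ‖y₁ - y₂‖)
    (ystar : EuclideanSpace ℝ (Fin p)) (hmin : ∀ z, h ystar ≤ h z) :
    ∀ c : ℝ, c ≠ 0 →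
      (∃ v : EuclideanSpace ℝ (Fin p), v ≠ 0 ∧ fderiv ℝ (gradient h) ystar v = c • v) →
      μ ≤ c := by
  intro c hc hex
  obtain ⟨v₀, hv₀, hev₀⟩ := hex
  have hv0 : ‖v₀‖ ≠ 0 := norm_ne_zero_iff.mpr hv₀
  set v : EuclideanSpace ℝ (Fin p) := ‖v₀‖⁻¹ • v₀ with hv_def
  have hvnorm : ‖v‖ = 1 := by
    rw [hv_def, norm_smul, norm_inv, norm_norm, inv_mul_cancel₀ hv0]
  have hev : fderiv ℝ (gradient h) ystar v = c • v := by
    rw [hv_def, (fderiv ℝ (gradient h) ystar).map_smul, hev₀, smul_comm]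
  -- regularity of the gradient
  have hdh : Differentiable ℝ h := hC2.differentiable (by norm_num)
  have hfd1 : ContDiff ℝ 1 (fderiv ℝ h) := hC2.fderiv_right (by norm_num)
  have hgC : ContDiff ℝ 1 (gradient h) := by
    have : gradient h = fun x =>
        (InnerProductSpace.toDual ℝ (EuclideanSpace ℝ (Fin p))).symm (fderiv ℝ h x) := rfl
    rw [this]
    exact (InnerProductSpace.toDual ℝ (EuclideanSpace ℝ (Fin p))).symm.contDiff.comp hfd1
  have hgdiff : Differentiable ℝ (gradient h) := hgC.differentiable (by norm_num)
  have hgcont : Continuous (gradient h) := hgdiff.continuous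
  -- gradient vanishes at the minimizer
  have hlm : IsLocalMin h ystar := Filter.Eventually.of_forall hmin
  have hgz : gradient h ystar = 0 := by
    show (InnerProductSpace.toDual ℝ (EuclideanSpace ℝ (Fin p))).symm (fderiv ℝ h ystar) = 0
    rw [hlm.fderiv_eq_zero]; simp
  -- the infimum is attained
  have hinf : (⨅ z, h z) = h ystar :=
    le_antisymm (ciInf_le ⟨h ystar, by rintro a ⟨z, rfl⟩; exact hmin z⟩ ystar) (le_ciInf hmin)
  set H := fderiv ℝ (gradient h) ystar with hH_def
  have hH : HasFDerivAt (gradient h) H ystar := (hgdiff ystar).hasFDerivAt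
  have hinner : ∀ x w, fderiv ℝ h x w = ⟪gradient h x, w⟫ := by
    intro x w
    exact (InnerProductSpace.toDual_symm_apply).symm
  -- derivative of t ↦ h (ystar + t • v)
  have hφ : ∀ s : ℝ, HasDerivAt (fun t : ℝ => h (ystar + t • v))
      ⟪gradient h (ystar + s • v), v⟫ s := by
    intro s
    have hline : HasDerivAt (fun t : ℝ => ystar + t • v) v s := by
      simpa using ((hasDerivAt_id s).smul_const v).const_add ystar
    have := ((hdh (ystar + s • v)).hasFDerivAt).comp_hasDerivAt s hline
    rw [hinner] at this
    exact this
  have hcont : Continuous fun s : ℝ => ⟪gradient h (ystar + s • v), v⟫ := by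
    apply Continuous.inner _ continuous_const
    exact hgcont.comp (by continuity)
  -- main estimate for each ε > 0
  have main : ∀ ε : ℝ, 0 < ε → 0 ≤ c + ε ∧ μ * (c - ε) ≤ (|c| + ε) ^ 2 := by
    intro ε hε
    have hlo := hH.isLittleO
    obtain ⟨δ, hδpos, hδ⟩ := Metric.eventually_nhds_iff.mp (hlo.def hε)
    set T := δ / 2 with hT_def
    have hTpos : 0 < T := by positivity
    have hbound : ∀ s ∈ Set.Icc (0:ℝ) T,
        ‖gradient h (ystar + s • v) - (s * c) • v‖ ≤ ε * s := by
      intro s hs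
      have hd : dist (ystar + s • v) ystar < δ := by
        rw [dist_eq_norm]
        simp only [add_sub_cancel_left, norm_smul, hvnorm, mul_one, Real.norm_eq_abs,
          abs_of_nonneg hs.1]
        linarith [hs.2]
      have h1 := hδ hd
      simp only [hgz, sub_zero, add_sub_cancel_left] at h1
      have h2 : H (s • v) = (s * c) • v := by
        rw [H.map_smul, hev, smul_smul]
      rw [h2] at h1
      calc ‖gradient h (ystar + s • v) - (s * c) • v‖ ≤ ε * ‖s • v‖ := h1
        _ = ε * s := by
          rw [norm_smul, hvnorm, mul_one, Real.norm_eq_abs, abs_of_nonneg hs.1]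
    have hdub : ∀ s ∈ Set.Icc (0:ℝ) T,
        ⟪gradient h (ystar + s • v), v⟫ ≤ (c + ε) * s := by
      intro s hs
      have h1 := hbound s hs
      have h2 : |⟪gradient h (ystar + s • v) - (s * c) • v, v⟫| ≤ ε * s := by
        calc |⟪gradient h (ystar + s • v) - (s * c) • v, v⟫|
            ≤ ‖gradient h (ystar + s • v) - (s * c) • v‖ * ‖v‖ := abs_real_inner_le_norm _ _
          _ ≤ ε * s := by rw [hvnorm, mul_one]; exact h1
      have h3 : ⟪gradient h (ystar + s • v) - (s * c) • v, v⟫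
          = ⟪gradient h (ystar + s • v), v⟫ - s * c := by
        rw [inner_sub_left, real_inner_smul_left, real_inner_self_eq_norm_sq, hvnorm]
        ring
      rw [h3] at h2
      have := abs_le.mp h2
      nlinarith [this.1, this.2]
    have hdlb : ∀ s ∈ Set.Icc (0:ℝ) T,
        (c - ε) * s ≤ ⟪gradient h (ystar + s • v), v⟫ := by
      intro s hs
      have h1 := hbound s hs
      have h2 : |⟪gradient h (ystar + s • v) - (s * c) • v, v⟫| ≤ ε * s := by
        calc |⟪gradient h (ystar + s • v) - (s * c) • v, v⟫|
            ≤ ‖gradient h (ystar + s • v) - (s * c) • v‖ * ‖v‖ := abs_real_inner_le_norm _ _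
          _ ≤ ε * s := by rw [hvnorm, mul_one]; exact h1
      have h3 : ⟪gradient h (ystar + s • v) - (s * c) • v, v⟫
          = ⟪gradient h (ystar + s • v), v⟫ - s * c := by
        rw [inner_sub_left, real_inner_smul_left, real_inner_self_eq_norm_sq, hvnorm]
        ring
      rw [h3] at h2
      have := abs_le.mp h2
      nlinarith [this.1, this.2]
    -- FTC
    have hFTC : ∫ s in (0:ℝ)..T, ⟪gradient h (ystar + s • v), v⟫
        = h (ystar + T • v) - h ystar := by
      have := intervalIntegral.integral_eq_sub_of_hasDerivAt
        (f := fun t : ℝ => h (ystar + t • v))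
        (fun s _ => hφ s) (hcont.intervalIntegrable 0 T)
      simpa using this
    have hIub : ∫ s in (0:ℝ)..T, ⟪gradient h (ystar + s • v), v⟫
        ≤ (c + ε) * (T ^ 2 / 2) := by
      have h1 : ∫ s in (0:ℝ)..T, (c + ε) * s = (c + ε) * (T ^ 2 / 2) := by
        rw [intervalIntegral.integral_const_mul, integral_id]; ring
      rw [← h1]
      apply intervalIntegral.integral_mono_on hTpos.le
        (hcont.intervalIntegrable 0 T)
        ((continuous_const.mul continuous_id).intervalIntegrable 0 T)
      intro s hs
      exact hdub s hs
    have hIlb : (c - ε) * (T ^ 2 / 2)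
        ≤ ∫ s in (0:ℝ)..T, ⟪gradient h (ystar + s • v), v⟫ := by
      have h1 : ∫ s in (0:ℝ)..T, (c - ε) * s = (c - ε) * (T ^ 2 / 2) := by
        rw [intervalIntegral.integral_const_mul, integral_id]; ring
      rw [← h1]
      apply intervalIntegral.integral_mono_on hTpos.le
        ((continuous_const.mul continuous_id).intervalIntegrable 0 T)
        (hcont.intervalIntegrable 0 T)
      intro s hs
      exact hdlb s hs
    have hub : h (ystar + T • v) - h ystar ≤ (c + ε) * (T ^ 2 / 2) := hFTC ▸ hIub
    have hlb : (c - ε) * (T ^ 2 / 2) ≤ h (ystar + T • v) - h ystar := hFTC ▸ hIlb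
    constructor
    · -- 0 ≤ c + ε
      have h0 : 0 ≤ h (ystar + T • v) - h ystar := sub_nonneg.mpr (hmin _)
      nlinarith [mul_pos hTpos hTpos, hub, h0]
    · -- PL estimate
      have hPL' := hPL (ystar + T • v)
      rw [hinf] at hPL'
      have hgub : ‖gradient h (ystar + T • v)‖ ≤ (|c| + ε) * T := by
        have h1 := hbound T ⟨hTpos.le, le_rfl⟩
        have h2 : ‖(T * c) • v‖ = |c| * T := by
          rw [norm_smul, hvnorm, mul_one, Real.norm_eq_abs, abs_mul,
            abs_of_nonneg hTpos.le]; ring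
        calc ‖gradient h (ystar + T • v)‖
            ≤ ‖gradient h (ystar + T • v) - (T * c) • v‖ + ‖(T * c) • v‖ := by
              have := norm_sub_norm_le (gradient h (ystar + T • v)) ((T * c) • v)
              linarith [norm_add_le (gradient h (ystar + T • v) - (T * c) • v) ((T * c) • v),
                (by abel : gradient h (ystar + T • v) - (T * c) • v + (T * c) • v
                  = gradient h (ystar + T • v))]
          _ ≤ ε * T + |c| * T := by rw [h2]; exact add_le_add h1 le_rfl
          _ = (|c| + ε) * T := by ring
      have hsq : ‖gradient h (ystar + T • v)‖ ^ 2 ≤ ((|c| + ε) * T) ^ 2 := by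
        apply sq_le_sq' _ hgub
        have : 0 ≤ (|c| + ε) * T := by positivity
        linarith [norm_nonneg (gradient h (ystar + T • v))]
      have key : 2 * μ * ((c - ε) * (T ^ 2 / 2)) ≤ ((|c| + ε) * T) ^ 2 := by
        calc 2 * μ * ((c - ε) * (T ^ 2 / 2))
            ≤ 2 * μ * (h (ystar + T • v) - h ystar) := by nlinarith
          _ ≤ ‖gradient h (ystar + T • v)‖ ^ 2 := hPL'
          _ ≤ ((|c| + ε) * T) ^ 2 := hsq
      have hT2 : (0:ℝ) < T ^ 2 := by positivity
      nlinarith [key]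
  -- conclude: c ≥ 0
  have hc0 : 0 ≤ c := by
    apply le_of_forall_pos_le_add
    intro ε hε
    linarith [(main ε hε).1]
  have hcpos : 0 < c := lt_of_le_of_ne hc0 (Ne.symm hc)
  have habs : |c| = c := abs_of_pos hcpos
  have key2 : ∀ ε : ℝ, 0 < ε → μ * (c - ε) ≤ (c + ε) ^ 2 := by
    intro ε hε
    have := (main ε hε).2
    rwa [habs] at this
  by_contra hlt
  push_neg at hlt
  set ε := min 1 ((μ * c - c ^ 2) / (2 * (μ + 2 * c + 1))) with hε_def
  have hnum : 0 < μ * c - c ^ 2 := by nlinarith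
  have hden : 0 < 2 * (μ + 2 * c + 1) := by nlinarith
  have hεpos : 0 < ε := lt_min one_pos (by positivity)
  have hε1 : ε ≤ 1 := min_le_left _ _
  have hε2 : ε ≤ (μ * c - c ^ 2) / (2 * (μ + 2 * c + 1)) := min_le_right _ _
  have h1 := key2 ε hεpos
  have h2 : ε * (2 * (μ + 2 * c + 1)) ≤ μ * c - c ^ 2 := (le_div_iff₀ hden).mp hε2
  nlinarith [h1, hε1, hεpos, hnum]
end
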